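/- Lemma 3.2(ii). Let r, m and N be positive integers and let λ, μ be partitions of length ≤ N with μ ⊆ λ such that λ/μ is an r-decomposable skew partition of size rm. Then the map (w⁽⁰⁾, w⁽¹⁾, …, w⁽ᵐ⁾) ↦ w⁽ᵐ⁾ is a bijection from K_N^{r,m}(μ, λ) to Abc_N(λ). -/

import Mathlib

open MvPolynomial Finset Classical

noncomputable section

/-- A partition: an antitone finitely supported function `ℕ → ℕ`.
`l.part i` is the `(i+1)`-st part `λ_{i+1}` (0-based indexing). -/
def Ptn : Type := {f : ℕ →₀ ℕ // Antitone (f : ℕ → ℕ)}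

namespace Ptn

/-- `l.part i = λ_{i+1}` (0-based indexing of the parts). -/
def part (l : Ptn) (i : ℕ) : ℕ := l.1 i

/-- The size `|λ|`. -/
def size (l : Ptn) : ℕ := l.1.sum fun _ v => v

/-- `Sub m l` means `μ ⊆ λ` (containment of Young diagrams). -/
def Sub (m l : Ptn) : Prop := ∀ i, m.part i ≤ l.part i

/-- The Young diagram (0-based): box `(i,j)` corresponds to row `i+1`, column `j+1`. -/
def cells (l : Ptn) : Set (ℕ × ℕ) := {c | c.2 < l.part c.1}

/-- The Young diagram of the skew partition `λ/μ`. -/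
def skew (m l : Ptn) : Set (ℕ × ℕ) := l.cells \ m.cells

/-- The top `t(λ/μ)`: `0` if `λ = μ` and otherwise the least (1-based) `i` with `λ_i ≠ μ_i`. -/
def top (m l : Ptn) : ℕ := if m = l then 0 else sInf {i | m.part i ≠ l.part i} + 1

/-- The bottom `b(λ/μ)`: `0` if `λ = μ` and otherwise the greatest (1-based) `i` with `λ_i ≠ μ_i`. -/
def bot (m l : Ptn) : ℕ := if m = l then 0 else sSup {i | m.part i ≠ l.part i} + 1

end Ptn

/-- Two boxes are edge-adjacent (horizontally or vertically). -/
def Adjacent (c d : ℕ × ℕ) : Prop :=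
  (c.1 = d.1 ∧ (c.2 + 1 = d.2 ∨ d.2 + 1 = c.2)) ∨
  (c.2 = d.2 ∧ (c.1 + 1 = d.1 ∨ d.1 + 1 = c.1))

/-- A set of boxes is connected via edge-adjacency. -/
def ConnectedSet (S : Set (ℕ × ℕ)) : Prop :=
  ∀ c ∈ S, ∀ d ∈ S, Relation.ReflTransGen (fun x y => y ∈ S ∧ Adjacent x y) c d

/-- `λ/μ` is an `r`-border strip. -/
def IsBorderStrip (r : ℕ) (m l : Ptn) : Prop :=
  Ptn.Sub m l ∧ l.size = m.size + r ∧ ConnectedSet (Ptn.skew m l) ∧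
    ∀ c ∈ Ptn.skew m l, (c.1 + 1, c.2 + 1) ∉ Ptn.skew m l

/-- The sign `(-1)^(b(λ/μ) - t(λ/μ))` of a border strip `λ/μ`. -/
def stripSgn (m l : Ptn) : ℤ := (-1) ^ (Ptn.bot m l - Ptn.top m l)

/-- A chain `μ = γ⁽⁰⁾ ⊆ … ⊆ γ⁽ᵈ⁾ = λ` of `r`-border strips with non-increasing tops. -/
def RChain (r : ℕ) (m l : Ptn) (d : ℕ) (γ : ℕ → Ptn) : Prop :=
  γ 0 = m ∧ γ d = l ∧ (∀ i < d, IsBorderStrip r (γ i) (γ (i + 1))) ∧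
    ∀ i, i + 1 < d → Ptn.top (γ (i + 1)) (γ (i + 2)) ≤ Ptn.top (γ i) (γ (i + 1))

/-- `λ/μ` is `r`-decomposable. -/
def RDecomposable (r : ℕ) (m l : Ptn) : Prop := ∃ d γ, RChain r m l d γ

/-- `sgn_r(λ/μ)`: the product of the signs of the border strips in a decomposition chain,
or `0` if `λ/μ` is not `r`-decomposable. -/
def sgnr (r : ℕ) (m l : Ptn) : ℤ :=
  if h : RDecomposable r m l then
    ∏ i ∈ Finset.range h.choose,
      stripSgn (h.choose_spec.choose i) (h.choose_spec.choose (i + 1))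
  else 0

/-- The alternant `a_{λ+δ(N)} = det(x_i^{λ_j + N - j})`. -/
def altPoly (N : ℕ) (l : Ptn) : MvPolynomial (Fin N) ℤ :=
  Matrix.det (Matrix.of fun i j : Fin N =>
    (X i : MvPolynomial (Fin N) ℤ) ^ (l.part j + (N - 1 - (j : ℕ))))

/-- The compositions of `m` of length `N`. -/
def comps (N m : ℕ) : Finset (Fin N → ℕ) :=
  (Fintype.piFinset fun _ => Finset.range (m + 1)).filter fun β => ∑ i, β i = m

/-- The complete homogeneous symmetric polynomial `h_m` in `N` variables. -/
def hPoly (N m : ℕ) : MvPolynomial (Fin N) ℤ :=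
  ∑ β ∈ comps N m, ∏ i, X i ^ β i

/-- The power sum `p_r` in `N` variables. -/
def pPoly (N r : ℕ) : MvPolynomial (Fin N) ℤ :=
  ∑ i : Fin N, X i ^ r

/-- The plethysm `p_r ∘ h_m = Σ_{β ∈ Com_N(m)} x^{rβ}` in `N` variables. -/
def prhm (N r m : ℕ) : MvPolynomial (Fin N) ℤ :=
  ∑ β ∈ comps N m, ∏ i, X i ^ (r * β i)

/-- A labelled abacus with `N` beads: a sequence `w : ℕ → ℕ` whose nonzero entries are
precisely `1, …, N`, each occurring exactly once. -/
structure Abacus (N : ℕ) where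
  w : ℕ → ℕ
  w_le : ∀ i, w i ≤ N
  uniq : ∀ B : ℕ, 1 ≤ B → B ≤ N → ∃! i, w i = B

namespace Abacus

variable {N : ℕ}

/-- `a.pos B` is the position `w⁻¹(B+1)` of bead `B+1` (beads indexed by `Fin N`, 0-based:
`B : Fin N` stands for the bead labelled `B+1`). -/
def pos (a : Abacus N) (B : Fin N) : ℕ :=
  (a.uniq ((B : ℕ) + 1) (Nat.le_add_left 1 B) B.isLt).choose

lemma pos_spec (a : Abacus N) (B : Fin N) : a.w (a.pos B) = (B : ℕ) + 1 :=
  (a.uniq ((B : ℕ) + 1) (Nat.le_add_left 1 B) B.isLt).choose_spec.1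

lemma pos_injective (a : Abacus N) : Function.Injective a.pos := by
  intro B C h
  have hB := a.pos_spec B
  have hC := a.pos_spec C
  rw [h, hC] at hB
  exact Fin.ext (by omega)

/-- The support of a labelled abacus: the set of occupied positions. -/
def suppF (a : Abacus N) : Finset ℕ := Finset.image a.pos Finset.univ

lemma card_suppF (a : Abacus N) : a.suppF.card = N := by
  rw [suppF, Finset.card_image_of_injective _ a.pos_injective, Finset.card_univ,
    Fintype.card_fin]

/-- `a.iota t` is `ι_{t+1}(w)`, the `(t+1)`-st largest occupied position (`t : Fin N`, 0-based). -/
def iota (a : Abacus N) (t : Fin N) : ℕ :=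
  (Finset.sort a.suppF (· ≤ ·)).getD (N - 1 - (t : ℕ)) 0

lemma length_sort_suppF (a : Abacus N) : (Finset.sort a.suppF (· ≤ ·)).length = N := by
  rw [Finset.length_sort, a.card_suppF]

lemma iota_mem (a : Abacus N) (t : Fin N) : a.iota t ∈ a.suppF := by
  have hlt : N - 1 - (t : ℕ) < (Finset.sort a.suppF (· ≤ ·)).length := by
    rw [a.length_sort_suppF]
    have := t.isLt
    omega
  rw [iota, List.getD_eq_getElem _ _ hlt]
  exact (Finset.mem_sort (α := ℕ) (· ≤ ·)).mp (List.getElem_mem hlt)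

lemma iota_injective (a : Abacus N) : Function.Injective a.iota := by
  intro t t' h
  have hn : (Finset.sort a.suppF (· ≤ ·)).Nodup := Finset.sort_nodup _ _
  have h1 : N - 1 - (t : ℕ) < (Finset.sort a.suppF (· ≤ ·)).length := by
    rw [a.length_sort_suppF]; have := t.isLt; omega
  have h2 : N - 1 - (t' : ℕ) < (Finset.sort a.suppF (· ≤ ·)).length := by
    rw [a.length_sort_suppF]; have := t'.isLt; omega
  rw [iota, iota, List.getD_eq_getElem _ _ h1, List.getD_eq_getElem _ _ h2] at h
  have := (List.Nodup.getElem_inj_iff hn (hi := h1) (hj := h2)).mp h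
  have ht := t.isLt
  have ht' := t'.isLt
  exact Fin.ext (by omega)

lemma one_le_w_iota (a : Abacus N) (t : Fin N) : 1 ≤ a.w (a.iota t) := by
  obtain ⟨B, -, hB⟩ := Finset.mem_image.mp (a.iota_mem t)
  rw [← hB, a.pos_spec]
  omega

/-- The permutation `σ_w ∈ S_N` (on `Fin N`, 0-based): `σ_w(B) = w_{ι_{B+1}(w)}`. -/
def sigma (a : Abacus N) : Equiv.Perm (Fin N) :=
  Equiv.ofBijective
    (fun t => (⟨a.w (a.iota t) - 1, by
        have h1 := a.one_le_w_iota t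
        have h2 := a.w_le (a.iota t)
        omega⟩ : Fin N))
    (Finite.injective_iff_bijective.mp (by
      intro t t' h
      have h1 := a.one_le_w_iota t
      have h1' := a.one_le_w_iota t'
      have hv : a.w (a.iota t) = a.w (a.iota t') := by
        have := congrArg Fin.val h
        simp only at this
        omega
      have hu := a.uniq (a.w (a.iota t)) h1 (a.w_le _)
      obtain ⟨i, -, hi⟩ := hu
      have e1 := hi (a.iota t) rfl
      have e2 := hi (a.iota t') hv.symm
      exact a.iota_injective (e1.trans e2.symm)))

/-- The sign `sgn(w)` of a labelled abacus: the sign of `σ_w`. -/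
def sgn (a : Abacus N) : ℤ := Equiv.Perm.sign a.sigma

/-- The weight `wt(w) = ∏_{i ∈ supp(w)} x_{w_i}^i`: the variable `X B` is `x_{B+1}`. -/
def wt (a : Abacus N) : MvPolynomial (Fin N) ℤ :=
  ∏ B : Fin N, X B ^ a.pos B


end Abacus

namespace Abacus

variable {N : ℕ}

/-- `a.HasShape l` says that the shape `sh(w) = (ι_1(w) - (N-1), ι_2(w) - (N-2), …, ι_N(w))`
of the abacus equals the partition `l` (stated additively: `ι_{t+1}(w) = l_{t+1} + (N-1-t)`). -/
def HasShape (a : Abacus N) (l : Ptn) : Prop :=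
  (∀ t : Fin N, l.part t + (N - 1 - (t : ℕ)) = a.iota t) ∧ ∀ i, N ≤ i → l.part i = 0

end Abacus

/-- `IsRMove r a a' i`: the abacus `a'` is obtained from `a` by `r`-moving the bead
at position `i` (to position `i + r`). -/
def IsRMove {N : ℕ} (r : ℕ) (a a' : Abacus N) (i : ℕ) : Prop :=
  a.w i ≠ 0 ∧ a.w (i + r) = 0 ∧ a'.w i = 0 ∧ a'.w (i + r) = a.w i ∧
    ∀ j, j ≠ i → j ≠ i + r → a'.w j = a.w j

/-- `SeriesRMoves r m a a' idx`: the abacus `a'` is obtained from `a` by a series of `m`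
`r`-moves of beads from positions `idx 0 < idx 1 < … < idx (m-1)`. -/
def SeriesRMoves {N : ℕ} (r m : ℕ) (a a' : Abacus N) (idx : Fin m → ℕ) : Prop :=
  StrictMono idx ∧ ∃ v : Fin (m + 1) → Abacus N, v 0 = a ∧ v (Fin.last m) = a' ∧
    ∀ j : Fin m, IsRMove r (v j.castSucc) (v j.succ) (idx j)

/-- The set `K_N^{r,m}(μ,λ)`: sequences `(w⁽⁰⁾, …, w⁽ᵐ⁾)` of labelled abaci with `N` beads,
of shapes `μ` and `λ` at the two ends, where `w⁽ʲ⁾` is obtained from `w⁽ʲ⁻¹⁾` by `r`-moving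
a bead from position `i_j`, with `i_1 < i_2 < … < i_m`. -/
def KSet (N r m : ℕ) (mu lam : Ptn) (v : Fin (m + 1) → Abacus N) : Prop :=
  (v 0).HasShape mu ∧ (v (Fin.last m)).HasShape lam ∧
    ∃ idx : Fin m → ℕ, StrictMono idx ∧
      ∀ j : Fin m, IsRMove r (v j.castSucc) (v j.succ) (idx j)

/-- Bead `B+1` is left-`r`-mobile in `a`: its position is at least `r` and the position `r`
steps to the left is empty. -/
def IsLeftRMobile {N : ℕ} (a : Abacus N) (r : ℕ) (B : Fin N) : Prop :=
  r ≤ a.pos B ∧ a.w (a.pos B - r) = 0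

/-- `IsLeftRMove a r B a'`: the abacus `a'` is obtained from `a` by `r`-moving bead `B+1`
leftwards. -/
def IsLeftRMove {N : ℕ} (a : Abacus N) (r : ℕ) (B : Fin N) (a' : Abacus N) : Prop :=
  r ≤ a.pos B ∧ a'.w (a.pos B - r) = (B : ℕ) + 1 ∧ a'.w (a.pos B) = 0 ∧
    ∀ j, j ≠ a.pos B - r → j ≠ a.pos B → a'.w j = a.w j

section Aux

variable {N : ℕ}

namespace Abacus

lemma ext' {a b : Abacus N} (h : a.w = b.w) : a = b := by
  cases a; cases b; simp_all

lemma w_ne_zero_iff (a : Abacus N) (q : ℕ) : a.w q ≠ 0 ↔ q ∈ a.suppF := by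
  constructor
  · intro h
    have h1 : 1 ≤ a.w q := Nat.one_le_iff_ne_zero.mpr h
    have h2 := a.w_le q
    obtain ⟨i, hi, hu⟩ := a.uniq (a.w q) h1 h2
    have hq : q = i := hu q rfl
    have hp : a.pos ⟨a.w q - 1, by omega⟩ = i := by
      apply hu
      rw [pos_spec]
      simp only
      omega
    exact Finset.mem_image.mpr ⟨⟨a.w q - 1, by omega⟩, Finset.mem_univ _, by rw [hp, ← hq]⟩
  · intro h
    obtain ⟨B, -, hB⟩ := Finset.mem_image.mp h
    rw [← hB, a.pos_spec]
    omega

lemma iota_eq_orderEmb (a : Abacus N) (t : Fin N) :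
    a.iota t = a.suppF.orderEmbOfFin a.card_suppF ⟨N - 1 - t, by have := t.isLt; omega⟩ := by
  have hb : N - 1 - (t : ℕ) < (Finset.sort a.suppF (· ≤ ·)).length := by
    rw [a.length_sort_suppF]; have := t.isLt; omega
  rw [Finset.orderEmbOfFin_apply, iota, List.getD_eq_getElem _ _ hb]
  simp [Fin.getElem_fin]

lemma hasShape_iff (a : Abacus N) (l : Ptn) :
    a.HasShape l ↔ ((∀ i, N ≤ i → l.part i = 0) ∧
      ∀ q, (a.w q ≠ 0 ↔ ∃ t : Fin N, l.part t + (N - 1 - (t : ℕ)) = q)) := by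
  constructor
  · rintro ⟨h1, h2⟩
    refine ⟨h2, fun q => ?_⟩
    rw [w_ne_zero_iff]
    have himg : Finset.image a.iota Finset.univ = a.suppF := by
      apply Finset.eq_of_subset_of_card_le
      · intro x hx
        obtain ⟨t, -, ht⟩ := Finset.mem_image.mp hx
        exact ht ▸ a.iota_mem t
      · rw [a.card_suppF, Finset.card_image_of_injective _ a.iota_injective,
          Finset.card_univ, Fintype.card_fin]
    rw [← himg]
    constructor
    · intro hq
      obtain ⟨t, -, ht⟩ := Finset.mem_image.mp hq
      exact ⟨t, by rw [h1 t]; exact ht⟩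
    · rintro ⟨t, ht⟩
      exact Finset.mem_image.mpr ⟨t, Finset.mem_univ _, by rw [← h1 t]; exact ht⟩
  · rintro ⟨h1, h2⟩
    refine ⟨fun t => ?_, h1⟩
    have hg : ∀ u : Fin N, (fun u : Fin N => l.part (N - 1 - (u : ℕ)) + (u : ℕ)) u ∈ a.suppF := by
      intro u
      rw [← w_ne_zero_iff, h2]
      refine ⟨⟨N - 1 - (u : ℕ), by have := u.isLt; omega⟩, ?_⟩
      simp only
      have := u.isLt
      congr 1
      omega
    have hmono : StrictMono (fun u : Fin N => l.part (N - 1 - (u : ℕ)) + (u : ℕ)) := by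
      intro u u' huu
      simp only
      have hpart : l.part (N - 1 - (u : ℕ)) ≤ l.part (N - 1 - (u' : ℕ)) :=
        l.2 (by omega : N - 1 - (u' : ℕ) ≤ N - 1 - (u : ℕ))
      have hlt : (u : ℕ) < (u' : ℕ) := huu
      omega
    have happ := congrFun (Finset.orderEmbOfFin_unique a.card_suppF hg hmono)
      ⟨N - 1 - (t : ℕ), by have := t.isLt; omega⟩
    simp only [Fin.val_mk] at happ
    have hidx : N - 1 - (N - 1 - (t : ℕ)) = (t : ℕ) := by have := t.isLt; omega
    rw [hidx] at happ
    rw [iota_eq_orderEmb, ← happ]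

/-- Two abaci of the same shape have the same zero positions. -/
lemma sameShape_zero {a b : Abacus N} {l : Ptn} (ha : a.HasShape l) (hb : b.HasShape l) :
    ∀ q, (a.w q = 0 ↔ b.w q = 0) := by
  intro q
  have h1 := ((hasShape_iff a l).mp ha).2 q
  have h2 := ((hasShape_iff b l).mp hb).2 q
  have h3 : a.w q ≠ 0 ↔ b.w q ≠ 0 := h1.trans h2.symm
  tauto

end Abacus

end Aux
section Aux2

variable {N : ℕ}

/-- Moving (swapping) the content of positions `p` and `q` of an abacus. -/
def Abacus.moveAb (a : Abacus N) (p q : ℕ) : Abacus N where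
  w := fun x => a.w (Equiv.swap p q x)
  w_le := fun _ => a.w_le _
  uniq := by
    intro B h1 h2
    obtain ⟨i, hi, hu⟩ := a.uniq B h1 h2
    refine ⟨Equiv.swap p q i, by simp [Equiv.swap_apply_self, hi], fun y hy => ?_⟩
    have := hu _ hy
    have : y = Equiv.swap p q ((Equiv.swap p q) y) := by simp
    rw [this, hu _ hy]

lemma Abacus.moveAb_w (a : Abacus N) (p q x : ℕ) :
    (a.moveAb p q).w x = a.w (Equiv.swap p q x) := rfl

lemma Abacus.isRMove_moveAb (a : Abacus N) (r p : ℕ) (h1 : a.w p ≠ 0) (h2 : a.w (p + r) = 0)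
    (hr : 0 < r) : IsRMove r a (a.moveAb p (p + r)) p := by
  refine ⟨h1, h2, ?_, ?_, ?_⟩
  · rw [Abacus.moveAb_w, Equiv.swap_apply_left]; exact h2
  · rw [Abacus.moveAb_w, Equiv.swap_apply_right]
  · intro j hj1 hj2
    rw [Abacus.moveAb_w, Equiv.swap_apply_of_ne_of_ne hj1 hj2]

/-- A validity predicate for ℕ-indexed series of r-moves. -/
def ValidSeq (r m : ℕ) (v : ℕ → Abacus N) (idx : ℕ → ℕ) : Prop :=
  (∀ j k, j < k → k < m → idx j < idx k) ∧ ∀ j, j < m → IsRMove r (v j) (v (j + 1)) (idx j)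

lemma ValidSeq.mono {r m m' : ℕ} {v : ℕ → Abacus N} {idx : ℕ → ℕ}
    (h : ValidSeq r m v idx) (hm : m' ≤ m) : ValidSeq r m' v idx :=
  ⟨fun j k hjk hk => h.1 j k hjk (lt_of_lt_of_le hk hm), fun j hj => h.2 j (lt_of_lt_of_le hj hm)⟩

lemma untouchedN (r : ℕ) : ∀ (m : ℕ) (v : ℕ → Abacus N) (idx : ℕ → ℕ),
    ValidSeq r (m + 1) v idx →
    (∀ p, idx m + r < p → (v (m + 1)).w p = (v 0).w p) ∧
      (v 0).w (idx m + r) = 0 ∧ (v (m + 1)).w (idx m + r) ≠ 0 := by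
  intro m
  induction m with
  | zero =>
    intro v idx hv
    obtain ⟨h1, h2, h3, h4, h5⟩ := hv.2 0 (by omega)
    exact ⟨fun p hp => h5 p (by omega) (by omega), h2, by rw [h4]; exact h1⟩
  | succ m ih =>
    intro v idx hv
    obtain ⟨ih1, ih2, ih3⟩ := ih v idx (hv.mono (by omega))
    obtain ⟨h1, h2, h3, h4, h5⟩ := hv.2 (m + 1) (by omega)
    have hlt : idx m < idx (m + 1) := hv.1 m (m + 1) (by omega) (by omega)
    refine ⟨fun p hp => ?_, ?_, ?_⟩
    · rw [h5 p (by omega) (by omega), ih1 p (by omega)]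
    · rw [← ih1 (idx (m + 1) + r) (by omega)]; exact h2
    · rw [h4]; exact h1

lemma injSeqN (r : ℕ) : ∀ (m : ℕ) (v v' : ℕ → Abacus N) (idx idx' : ℕ → ℕ),
    ValidSeq r m v idx → ValidSeq r m v' idx' →
    (∀ p, (v 0).w p = 0 ↔ (v' 0).w p = 0) → v m = v' m → ∀ j, j ≤ m → v j = v' j := by
  intro m
  induction m with
  | zero =>
    intro v v' idx idx' _ _ _ hend j hj
    have hj0 : j = 0 := by omega
    rw [hj0, hend]
  | succ m ih =>
    intro v v' idx idx' hv hv' hzero hend j hj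
    -- first, idx m = idx' m
    obtain ⟨u1, u2, u3⟩ := untouchedN r m v idx hv
    obtain ⟨u1', u2', u3'⟩ := untouchedN r m v' idx' hv'
    have hM : idx m = idx' m := by
      rcases lt_trichotomy (idx m) (idx' m) with h | h | h
      · exfalso
        have e1 : (v (m + 1)).w (idx' m + r) = (v 0).w (idx' m + r) := u1 _ (by omega)
        have e2 : (v 0).w (idx' m + r) = 0 := (hzero _).mpr u2'
        rw [hend] at e1
        exact u3' (e1.trans e2)
      · exact h
      · exfalso
        have e1 : (v' (m + 1)).w (idx m + r) = (v' 0).w (idx m + r) := u1' _ (by omega)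
        have e2 : (v' 0).w (idx m + r) = 0 := (hzero _).mp u2
        rw [← hend] at e1
        exact u3 (e1.trans e2)
    -- next, v m = v' m
    obtain ⟨h1, h2, h3, h4, h5⟩ := hv.2 m (by omega)
    obtain ⟨h1', h2', h3', h4', h5'⟩ := hv'.2 m (by omega)
    have hvm : v m = v' m := by
      apply Abacus.ext'
      funext q
      rcases eq_or_ne q (idx m) with hq | hq1
      · rw [hq, ← h4, hend, hM]
        exact h4'
      rcases eq_or_ne q (idx m + r) with hq | hq2
      · rw [hq, h2, hM]
        exact h2'.symm
      · rw [← h5 q hq1 hq2, ← h5' q (hM ▸ hq1) (hM ▸ hq2), hend]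
    rcases Nat.lt_or_ge j (m + 1) with hj' | hj'
    · exact ih v v' idx idx' (hv.mono (by omega)) (hv'.mono (by omega)) hzero hvm j (by omega)
    · have : j = m + 1 := by omega
      rw [this, hend]

end Aux2
section Aux3

lemma mem_skew_iff {m l : Ptn} {c : ℕ × ℕ} :
    c ∈ Ptn.skew m l ↔ m.part c.1 ≤ c.2 ∧ c.2 < l.part c.1 := by
  simp only [Ptn.skew, Ptn.cells, Set.mem_diff, Set.mem_setOf_eq]
  omega

lemma path_row_exists {S : Set (ℕ × ℕ)} {d : ℕ × ℕ} {i : ℕ} (hdi : d.1 ≤ i) :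
    ∀ {c : ℕ × ℕ}, Relation.ReflTransGen (fun x y => y ∈ S ∧ Adjacent x y) c d →
    c ∈ S → i ≤ c.1 → ∃ e ∈ S, e.1 = i := by
  intro c h
  induction h using Relation.ReflTransGen.head_induction_on with
  | refl => exact fun hd hi => ⟨d, hd, by omega⟩
  | head hstep htail ih =>
    rename_i a c'
    intro ha hi
    obtain ⟨hc'S, hadj⟩ := hstep
    rcases le_or_gt i c'.1 with h1 | h1
    · exact ih hc'S h1
    · rcases hadj with ⟨he, -⟩ | ⟨-, he | he⟩
      · omega
      · omega
      · exact ⟨a, ha, by omega⟩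

lemma path_cross {S : Set (ℕ × ℕ)} {d : ℕ × ℕ} {i : ℕ} (hdi : d.1 ≤ i) :
    ∀ {c : ℕ × ℕ}, Relation.ReflTransGen (fun x y => y ∈ S ∧ Adjacent x y) c d →
    c ∈ S → i + 1 ≤ c.1 → ∃ j, (i, j) ∈ S ∧ (i + 1, j) ∈ S := by
  intro c h
  induction h using Relation.ReflTransGen.head_induction_on with
  | refl => exact fun _ hi => absurd hdi (by omega)
  | head hstep htail ih =>
    rename_i a c'
    intro ha hi
    obtain ⟨hc'S, hadj⟩ := hstep
    rcases le_or_gt (i + 1) c'.1 with h1 | h1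
    · exact ih hc'S h1
    · rcases hadj with ⟨he, -⟩ | ⟨he, h2 | h2⟩
      · omega
      · omega
      · have ha1 : a.1 = i + 1 := by omega
        have hc1 : c'.1 = i := by omega
        refine ⟨c'.2, ?_, ?_⟩
        · have he2 : (i, c'.2) = c' := by rw [← hc1]
          rw [he2]; exact hc'S
        · have he2 : (i + 1, c'.2) = a := by rw [← ha1, ← he]
          rw [he2]; exact ha

lemma Ptn.size_eq_sum {l : Ptn} {N : ℕ} (h : ∀ i, N ≤ i → l.part i = 0) :
    l.size = ∑ i ∈ Finset.range N, l.part i := by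
  rw [Ptn.size]
  apply Finsupp.sum_of_support_subset
  · intro i hi
    rw [Finsupp.mem_support_iff] at hi
    rw [Finset.mem_range]
    by_contra h'
    exact hi (h i (by omega))
  · intros; rfl

lemma strip_struct {N r : ℕ} (hr : 0 < r) {g g' : Ptn} (hbs : IsBorderStrip r g g')
    (hbound : ∀ i, N ≤ i → g'.part i = 0) {T B : ℕ}
    (hTd : T = sInf {i | g.part i ≠ g'.part i}) (hBd : B = sSup {i | g.part i ≠ g'.part i}) :
    T ≤ B ∧ B < N ∧ (∀ i, i < T ∨ B < i → g.part i = g'.part i) ∧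
      (∀ i, T ≤ i → i ≤ B → g.part i < g'.part i) ∧
      (∀ i, T ≤ i → i < B → g'.part (i + 1) = g.part i + 1) ∧
      g.part B + (N - 1 - B) + r = g'.part T + (N - 1 - T) := by
  obtain ⟨hsub, hsize, hconn, h2x2⟩ := hbs
  subst hTd hBd
  set D := {i | g.part i ≠ g'.part i} with hD
  have hne : D.Nonempty := by
    by_contra h
    have hall : ∀ i, g.part i = g'.part i := by
      intro i
      by_contra hi
      exact h ⟨i, hi⟩
    have hsz : g.size = g'.size := by
      unfold Ptn.size
      congr 1
      apply Finsupp.ext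
      intro i
      exact hall i
    omega
  have hDN : ∀ i ∈ D, i < N := by
    intro i hi
    by_contra h
    have h1 := hbound i (by omega)
    have h2 := hsub i
    exact hi (by omega)
  have hDbdd : BddAbove D := ⟨N, fun i hi => (hDN i hi).le⟩
  have hTD : sInf D ∈ D := Nat.sInf_mem hne
  have hBD : sSup D ∈ D := Nat.sSup_mem hne hDbdd
  set T := sInf D
  set B := sSup D
  have hTB : T ≤ B := le_csSup hDbdd hTD
  have hBN : B < N := hDN B hBD
  have houtside : ∀ i, i < T ∨ B < i → g.part i = g'.part i := by
    intro i hi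
    by_contra h
    have hiD : i ∈ D := h
    rcases hi with hi | hi
    · exact absurd (Nat.sInf_le hiD) (by omega)
    · exact absurd (le_csSup hDbdd hiD) (by omega)
  have hcellT : (T, g.part T) ∈ Ptn.skew g g' :=
    mem_skew_iff.mpr ⟨le_refl _, lt_of_le_of_ne (hsub T) hTD⟩
  have hcellB : (B, g.part B) ∈ Ptn.skew g g' :=
    mem_skew_iff.mpr ⟨le_refl _, lt_of_le_of_ne (hsub B) hBD⟩
  have hint : ∀ i, T ≤ i → i ≤ B → g.part i < g'.part i := by
    intro i h1 h2
    rcases eq_or_lt_of_le (hsub i) with he | hlt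
    · exfalso
      have hpath := hconn (B, g.part B) hcellB (T, g.part T) hcellT
      obtain ⟨e, heS, hei⟩ := path_row_exists (by simpa using h1) hpath hcellB (by simpa using h2)
      obtain ⟨e1, e2⟩ := mem_skew_iff.mp heS
      rw [hei] at e1 e2
      omega
    · exact hlt
  have hcons : ∀ i, T ≤ i → i < B → g'.part (i + 1) = g.part i + 1 := by
    intro i h1 h2
    have hi1 : g.part (i + 1) < g'.part (i + 1) := hint (i + 1) (by omega) (by omega)
    have hii : g.part i < g'.part i := hint i h1 (by omega)
    have hcell1 : (i + 1, g.part (i + 1)) ∈ Ptn.skew g g' := mem_skew_iff.mpr ⟨le_refl _, hi1⟩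
    have hcell0 : (i, g.part i) ∈ Ptn.skew g g' := mem_skew_iff.mpr ⟨le_refl _, hii⟩
    have hpath := hconn (i + 1, g.part (i + 1)) hcell1 (i, g.part i) hcell0
    obtain ⟨j, hj1, hj2⟩ := path_cross (S := Ptn.skew g g') (d := (i, g.part i)) (i := i) (by simp) hpath hcell1 (by simp)
    obtain ⟨ha1, ha2⟩ := mem_skew_iff.mp hj1
    obtain ⟨hb1, hb2⟩ := mem_skew_iff.mp hj2
    simp only at ha1 ha2 hb1 hb2
    have hanti : g'.part (i + 1) ≤ g'.part i := g'.2 (Nat.le_succ i)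
    by_contra hne'
    have hge2 : g.part i + 2 ≤ g'.part (i + 1) := by omega
    have hc : ((i, g'.part (i + 1) - 2) : ℕ × ℕ) ∈ Ptn.skew g g' := by
      refine mem_skew_iff.mpr ⟨?_, ?_⟩ <;> simp only <;> omega
    have hno := h2x2 _ hc
    apply hno
    refine mem_skew_iff.mpr ⟨?_, ?_⟩ <;> simp only <;> omega
  have htel : ∀ k, T + k ≤ B →
      (∑ i ∈ Finset.Icc T (T + k), ((g'.part i : ℤ) - g.part i))
        = (g'.part T : ℤ) - g.part (T + k) + k := by
    intro k
    induction k with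
    | zero => intro _; simp
    | succ k ih =>
      intro h
      rw [show T + (k + 1) = (T + k) + 1 by omega,
        Finset.sum_Icc_succ_top (by omega : T ≤ T + k + 1)]
      rw [ih (by omega)]
      have hc := hcons (T + k) (by omega) (by omega)
      push_cast
      omega
  have hgbound : ∀ i, N ≤ i → g.part i = 0 := by
    intro i hi
    have := hsub i
    have := hbound i hi
    omega
  have hs1 : g.size = ∑ i ∈ Finset.range N, g.part i := Ptn.size_eq_sum hgbound
  have hs2 : g'.size = ∑ i ∈ Finset.range N, g'.part i := Ptn.size_eq_sum hbound
  have hsumZ : (∑ i ∈ Finset.range N, ((g'.part i : ℤ) - g.part i)) = r := by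
    rw [Finset.sum_sub_distrib]
    have e1 : (∑ i ∈ Finset.range N, (g'.part i : ℤ)) = (g'.size : ℤ) := by
      rw [hs2]; push_cast; rfl
    have e2 : (∑ i ∈ Finset.range N, (g.part i : ℤ)) = (g.size : ℤ) := by
      rw [hs1]; push_cast; rfl
    rw [e1, e2, hsize]
    push_cast
    ring
  have hsub' : Finset.Icc T B ⊆ Finset.range N := by
    intro x hx
    rw [Finset.mem_Icc] at hx
    rw [Finset.mem_range]
    omega
  have hzero : ∀ x ∈ Finset.range N, x ∉ Finset.Icc T B → ((g'.part x : ℤ) - g.part x) = 0 := by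
    intro x _ hx
    rw [Finset.mem_Icc] at hx
    have := houtside x (by omega)
    omega
  have hIccSum : (∑ i ∈ Finset.Icc T B, ((g'.part i : ℤ) - g.part i)) = r := by
    rw [Finset.sum_subset hsub' hzero]
    exact hsumZ
  have hkey := htel (B - T) (by omega)
  rw [show T + (B - T) = B by omega] at hkey
  refine ⟨hTB, hBN, houtside, hint, hcons, ?_⟩
  rw [hIccSum] at hkey
  omega

end Aux3
section Aux4

lemma pos_strict {l : Ptn} {N t t' : ℕ} (h : t < t') (h' : t' < N) :
    l.part t' + (N - 1 - t') < l.part t + (N - 1 - t) := by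
  have hp : l.part t' ≤ l.part t := l.2 h.le
  omega

lemma move_shape {N r : ℕ} (hr : 0 < r) {g g' : Ptn} (hbs : IsBorderStrip r g g')
    (hbound : ∀ i, N ≤ i → g'.part i = 0) {T B : ℕ}
    (hTd : T = sInf {i | g.part i ≠ g'.part i}) (hBd : B = sSup {i | g.part i ≠ g'.part i})
    {a : Abacus N} (ha : a.HasShape g) {p : ℕ} (hp : p = g.part B + (N - 1 - B)) :
    a.w p ≠ 0 ∧ a.w (p + r) = 0 ∧ (a.moveAb p (p + r)).HasShape g' := by
  obtain ⟨hTB, hBN, hout, hint, hcons, heq⟩ := strip_struct hr hbs hbound hTd hBd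
  obtain ⟨c1, c2⟩ := (Abacus.hasShape_iff a g).mp ha
  have hTN : T < N := by omega
  have hprT : p + r = g'.part T + (N - 1 - T) := by omega
  have e2 : ∀ t : ℕ, T < t → t ≤ B →
      g'.part t + (N - 1 - t) = g.part (t - 1) + (N - 1 - (t - 1)) := by
    intro t h1 h2
    have := hcons (t - 1) (by omega) (by omega)
    rw [show t - 1 + 1 = t by omega] at this
    omega
  have hwp : a.w p ≠ 0 := by
    rw [c2]
    exact ⟨⟨B, hBN⟩, by simp [hp]⟩
  have hwpr : a.w (p + r) = 0 := by
    by_contra h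
    obtain ⟨s, hs⟩ := (c2 (p + r)).mp h
    have hsN := s.isLt
    rcases lt_trichotomy (s : ℕ) T with hlt | heqT | hgt
    · have h1 := hout s (Or.inl hlt)
      have h2 := pos_strict (l := g') hlt hTN
      omega
    · have h1 := hint T le_rfl hTB
      rw [heqT] at hs
      omega
    · have h2 := pos_strict (l := g) hgt hsN
      have h3 := hint T le_rfl hTB
      omega
  refine ⟨hwp, hwpr, ?_⟩
  rw [Abacus.hasShape_iff]
  refine ⟨hbound, fun q => ?_⟩
  rw [Abacus.moveAb_w]
  rcases eq_or_ne q p with rfl | hq1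
  · rw [Equiv.swap_apply_left]
    simp only [hwpr, ne_eq, not_true_eq_false, false_iff, not_exists]
    intro t ht
    have htN := t.isLt
    rcases lt_trichotomy (t : ℕ) T with hlt | heqT | hgt
    · have h1 := hout t (Or.inl hlt)
      have h2 := pos_strict (l := g) (show (t : ℕ) < B by omega) hBN
      omega
    · rw [heqT] at ht
      omega
    · rcases le_or_gt (t : ℕ) B with hle | hgtB
      · have h1 := e2 t hgt hle
        have h2 := pos_strict (l := g) (show (t : ℕ) - 1 < B by omega) hBN
        omega
      · have h1 := hout t (Or.inr hgtB)
        have h2 := pos_strict (l := g) hgtB htN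
        omega
  rcases eq_or_ne q (p + r) with rfl | hq2
  · rw [Equiv.swap_apply_right]
    simp only [hwp, ne_eq, not_false_eq_true, true_iff]
    exact ⟨⟨T, hTN⟩, by simp [hprT]⟩
  · rw [Equiv.swap_apply_of_ne_of_ne hq1 hq2, c2]
    constructor
    · rintro ⟨t, ht⟩
      have htN := t.isLt
      rcases lt_or_ge (t : ℕ) T with hlt | hge
      · exact ⟨t, by rw [← hout t (Or.inl hlt)]; exact ht⟩
      rcases lt_or_ge B (t : ℕ) with hgtB | hleB
      · exact ⟨t, by rw [← hout t (Or.inr hgtB)]; exact ht⟩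
      rcases eq_or_lt_of_le hleB with heqB | hltB
      · exfalso
        apply hq1
        rw [← ht, heqB, hp]
      · refine ⟨⟨(t : ℕ) + 1, by omega⟩, ?_⟩
        have h1 := e2 ((t : ℕ) + 1) (by omega) (by omega)
        simp only [Fin.val_mk]
        rw [h1]
        simpa using ht
    · rintro ⟨t, ht⟩
      have htN := t.isLt
      rcases lt_or_ge (t : ℕ) T with hlt | hge
      · exact ⟨t, by rw [hout t (Or.inl hlt)]; exact ht⟩
      rcases lt_or_ge B (t : ℕ) with hgtB | hleB
      · exact ⟨t, by rw [hout t (Or.inr hgtB)]; exact ht⟩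
      rcases eq_or_lt_of_le hge with heqT | hgtT
      · exfalso
        apply hq2
        rw [← ht, ← heqT, hprT]
      · refine ⟨⟨(t : ℕ) - 1, by omega⟩, ?_⟩
        have h1 := e2 (t : ℕ) hgtT hleB
        simp only [Fin.val_mk]
        omega

end Aux4
section Aux5

lemma posf_inj {N : ℕ} (l : Ptn) {t t' : Fin N}
    (h : l.part t + (N - 1 - (t : ℕ)) = l.part t' + (N - 1 - (t' : ℕ))) : t = t' := by
  rcases lt_trichotomy (t : ℕ) (t' : ℕ) with hl | he | hl
  · exact absurd h (by have := pos_strict (l := l) hl t'.isLt; omega)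
  · exact Fin.ext he
  · exact absurd h (by have := pos_strict (l := l) hl t.isLt; omega)

/-- An initial abacus of a given shape. -/
def initAbacus (N : ℕ) (l : Ptn) : Abacus N where
  w := fun p => if h : ∃ t : Fin N, l.part t + (N - 1 - (t : ℕ)) = p then N - (h.choose : ℕ) else 0
  w_le := by
    intro i
    split
    · omega
    · omega
  uniq := by
    intro B h1 h2
    refine ⟨l.part (⟨N - B, by omega⟩ : Fin N) + (N - 1 - (N - B)), ?_, ?_⟩
    · have hex : ∃ t : Fin N, l.part t + (N - 1 - (t : ℕ)) =
          l.part (⟨N - B, by omega⟩ : Fin N) + (N - 1 - (N - B)) := ⟨⟨N - B, by omega⟩, rfl⟩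
      simp only [dif_pos hex]
      have hsp := hex.choose_spec
      have := posf_inj l hsp
      rw [this]
      simp only [Fin.val_mk]
      omega
    · intro y hy
      by_cases hex : ∃ t : Fin N, l.part t + (N - 1 - (t : ℕ)) = y
      · simp only [dif_pos hex] at hy
        have hsp := hex.choose_spec
        have hv : (hex.choose : ℕ) = N - B := by
          have := hex.choose.isLt
          omega
        rw [← hsp]
        congr 1
        · exact congrArg l.part (by rw [hv])
        · rw [hv]
      · simp only [dif_neg hex] at hy
        omega

lemma initAbacus_hasShape (N : ℕ) (l : Ptn) (hl : ∀ i, N ≤ i → l.part i = 0) :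
    (initAbacus N l).HasShape l := by
  rw [Abacus.hasShape_iff]
  refine ⟨hl, fun q => ?_⟩
  show (if h : ∃ t : Fin N, l.part t + (N - 1 - (t : ℕ)) = q then N - (h.choose : ℕ) else 0) ≠ 0
    ↔ _
  by_cases h : ∃ t : Fin N, l.part t + (N - 1 - (t : ℕ)) = q
  · simp only [dif_pos h]
    have := h.choose.isLt
    constructor
    · intro _; exact h
    · intro _; omega
  · simp only [dif_neg h]
    simp [h]

/-- The chain of abaci obtained by successively moving beads from positions `pf j`. -/
def chainAb (N : ℕ) (mu : Ptn) (pf : ℕ → ℕ) (r : ℕ) : ℕ → Abacus N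
  | 0 => initAbacus N mu
  | j + 1 => (chainAb N mu pf r j).moveAb (pf j) (pf j + r)

lemma kset_nonempty (N r m : ℕ) (hr : 0 < r) (hN : 0 < N) (mu lam : Ptn)
    (hlam : ∀ i, N ≤ i → lam.part i = 0)
    (hdec : RDecomposable r mu lam) (hsize : lam.size = mu.size + r * m) :
    ∃ v : Fin (m + 1) → Abacus N, KSet N r m mu lam v := by
  obtain ⟨d, γ, hγ0, hγd, hstrip, htops⟩ := hdec
  -- sizes along the chain
  have hsz : ∀ j, j ≤ d → (γ j).size = mu.size + r * j := by
    intro j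
    induction j with
    | zero => intro _; rw [hγ0]; ring_nf
    | succ j ih =>
      intro h
      have h1 := (hstrip j (by omega)).2.1
      rw [ih (by omega)] at h1
      rw [h1]; ring
  have hdm : d = m := by
    have h1 := hsz d le_rfl
    rw [hγd, hsize] at h1
    have : r * m = r * d := by omega
    exact (Nat.eq_of_mul_eq_mul_left hr this).symm
  subst hdm
  -- subset of lambda
  have hsubk : ∀ k, k ≤ d → ∀ j, j ≤ k → Ptn.Sub (γ j) (γ k) := by
    intro k
    induction k with
    | zero =>
      intro _ j hj
      have : j = 0 := by omega
      rw [this]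
      exact fun i => le_rfl
    | succ k ih =>
      intro hk j hj
      rcases eq_or_lt_of_le hj with he | hlt
      · rw [he]; exact fun i => le_rfl
      · intro i
        exact le_trans (ih (by omega) j (by omega) i) ((hstrip k (by omega)).1 i)
  have hbound : ∀ j, j ≤ d → ∀ i, N ≤ i → (γ j).part i = 0 := by
    intro j hj i hi
    have h1 := hsubk d le_rfl j hj i
    rw [hγd] at h1
    have := hlam i hi
    omega
  have hneq : ∀ j, j < d → γ j ≠ γ (j + 1) := by
    intro j hj h
    have h1 := hsz j (by omega)
    have h2 := hsz (j + 1) (by omega)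
    rw [h] at h1
    have hrj : r * (j + 1) = r * j + r := by ring
    omega
  -- the positions
  have hstep : ∀ j, j < d → ∀ a : Abacus N, a.HasShape (γ j) →
      a.w ((γ j).part (sSup {i | (γ j).part i ≠ (γ (j+1)).part i})
          + (N - 1 - sSup {i | (γ j).part i ≠ (γ (j+1)).part i})) ≠ 0 ∧
      a.w ((γ j).part (sSup {i | (γ j).part i ≠ (γ (j+1)).part i})
          + (N - 1 - sSup {i | (γ j).part i ≠ (γ (j+1)).part i}) + r) = 0 ∧
      (a.moveAb ((γ j).part (sSup {i | (γ j).part i ≠ (γ (j+1)).part i})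
          + (N - 1 - sSup {i | (γ j).part i ≠ (γ (j+1)).part i}))
        ((γ j).part (sSup {i | (γ j).part i ≠ (γ (j+1)).part i})
          + (N - 1 - sSup {i | (γ j).part i ≠ (γ (j+1)).part i}) + r)).HasShape (γ (j+1)) :=
    fun j hj a ha => move_shape hr (hstrip j hj) (hbound (j+1) (by omega)) rfl rfl ha rfl
  set pf : ℕ → ℕ := fun j => (γ j).part (sSup {i | (γ j).part i ≠ (γ (j+1)).part i})
      + (N - 1 - sSup {i | (γ j).part i ≠ (γ (j+1)).part i}) with hpf
  have hTle : ∀ j, j + 1 < d →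
      sInf {i | (γ (j+1)).part i ≠ (γ (j+2)).part i} ≤ sInf {i | (γ j).part i ≠ (γ (j+1)).part i} := by
    intro j hj
    have ht := htops j hj
    rw [Ptn.top, Ptn.top, if_neg (hneq j (by omega)), if_neg (hneq (j+1) (by omega))] at ht
    omega
  have hpmono : ∀ j, j + 1 < d → pf j < pf (j+1) := by
    intro j hj
    obtain ⟨hTB1, hBN1, -, -, -, heq1⟩ :=
      strip_struct hr (hstrip j (by omega)) (hbound (j+1) (by omega)) rfl rfl
    have hs2 : IsBorderStrip r (γ (j+1)) (γ (j+2)) := hstrip (j+1) (by omega)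
    obtain ⟨hTB2, hBN2, -, hint2, -, heq2⟩ :=
      strip_struct hr hs2 (hbound (j+2) (by omega)) rfl rfl
    have hT := hTle j hj
    rcases eq_or_lt_of_le hT with he | hlt
    · have h2 := hint2 (sInf {i | (γ (j+1)).part i ≠ (γ (j+2)).part i}) le_rfl hTB2
      rw [he] at h2 heq2
      simp only [hpf, show j+1+1 = j+2 from rfl]
      omega
    · have h3 := pos_strict (l := γ (j+2)) hlt
        (by omega : sInf {i | (γ j).part i ≠ (γ (j+1)).part i} < N)
      have h4 : (γ (j+1)).part (sInf {i | (γ j).part i ≠ (γ (j+1)).part i})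
          ≤ (γ (j+2)).part (sInf {i | (γ j).part i ≠ (γ (j+1)).part i}) :=
        hs2.1 _
      simp only [hpf, show j+1+1 = j+2 from rfl]
      omega
  have hpm : ∀ k, k < d → ∀ j, j < k → pf j < pf k := by
    intro k
    induction k with
    | zero => intro _ j hj; omega
    | succ k ih =>
      intro hk j hj
      rcases eq_or_lt_of_le (Nat.lt_succ_iff.mp hj) with he | hlt
      · rw [he]; exact hpmono k hk
      · exact lt_trans (ih (by omega) j hlt) (hpmono k hk)
  -- the chain of abaci
  have hshape : ∀ j, j ≤ d → (chainAb N mu pf r j).HasShape (γ j) := by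
    intro j
    induction j with
    | zero =>
      intro _
      show (initAbacus N mu).HasShape (γ 0)
      rw [hγ0]
      refine initAbacus_hasShape N mu (fun i hi => ?_)
      have := hbound 0 (by omega) i hi
      rwa [hγ0] at this
    | succ j ih =>
      intro hj
      exact (hstep j (by omega) _ (ih (by omega))).2.2
  have hmoves : ∀ j, j < d → IsRMove r (chainAb N mu pf r j) (chainAb N mu pf r (j+1)) (pf j) := by
    intro j hj
    obtain ⟨h1, h2, -⟩ := hstep j hj _ (hshape j (by omega))
    exact Abacus.isRMove_moveAb _ r (pf j) h1 h2 hr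
  refine ⟨fun j => chainAb N mu pf r j, ?_, ?_, ⟨fun j => pf j, ?_, ?_⟩⟩
  · have h0 := hshape 0 (by omega)
    rwa [hγ0] at h0
  · have hd := hshape d le_rfl
    rwa [hγd] at hd
  · intro j k hjk
    exact hpm k k.isLt j hjk
  · intro j
    exact hmoves j j.isLt

end Aux5
section Aux6

variable {N : ℕ}

/-- The label permutation turning abacus `b` into abacus `a` (of the same support). -/
def relabelFn (a b : Abacus N) : ℕ → ℕ :=
  fun k => if h : 1 ≤ k ∧ k ≤ N then a.w (b.pos ⟨k - 1, by omega⟩) else 0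

lemma relabelFn_zero (a b : Abacus N) : relabelFn a b 0 = 0 := by
  unfold relabelFn
  rw [dif_neg (by omega)]

lemma relabelFn_pos (a b : Abacus N) (t : Fin N) :
    relabelFn a b ((t : ℕ) + 1) = a.w (b.pos t) := by
  unfold relabelFn
  rw [dif_pos ⟨by omega, by have := t.isLt; omega⟩]
  exact congrArg (fun x => a.w (b.pos x)) (Fin.ext (by simp))

variable {a b : Abacus N}

lemma relabelFn_ne (hz : ∀ q, (a.w q = 0 ↔ b.w q = 0)) (t : Fin N) : relabelFn a b ((t : ℕ) + 1) ≠ 0 := by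
  rw [relabelFn_pos]
  intro h
  have hb := (hz _).mp h
  rw [b.pos_spec] at hb
  omega

lemma relabelFn_ne' (hz : ∀ q, (a.w q = 0 ↔ b.w q = 0)) {k : ℕ} (h1 : 1 ≤ k) (h2 : k ≤ N) : relabelFn a b k ≠ 0 := by
  have := relabelFn_ne hz ⟨k - 1, by omega⟩
  simpa [show k - 1 + 1 = k by omega] using this

lemma relabelFn_inj (hz : ∀ q, (a.w q = 0 ↔ b.w q = 0)) {k k' : ℕ} (h1 : 1 ≤ k) (h2 : k ≤ N) (h1' : 1 ≤ k') (h2' : k' ≤ N)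
    (h : relabelFn a b k = relabelFn a b k') : k = k' := by
  unfold relabelFn at h
  rw [dif_pos ⟨h1, h2⟩, dif_pos ⟨h1', h2'⟩] at h
  have hne : a.w (b.pos ⟨k - 1, by omega⟩) ≠ 0 := by
    have := relabelFn_ne' hz h1 h2
    unfold relabelFn at this
    rwa [dif_pos ⟨h1, h2⟩] at this
  obtain ⟨i, hi, hu⟩ := a.uniq (a.w (b.pos ⟨k - 1, by omega⟩)) (by omega) (a.w_le _)
  have e1 : b.pos ⟨k - 1, by omega⟩ = i := hu _ rfl
  have e2 : b.pos ⟨k' - 1, by omega⟩ = i := hu _ h.symm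
  have := b.pos_injective (e1.trans e2.symm)
  have := congrArg Fin.val this
  simp at this
  omega

lemma relabelFn_surj (hz : ∀ q, (a.w q = 0 ↔ b.w q = 0)) {C : ℕ} (h1 : 1 ≤ C) (h2 : C ≤ N) :
    ∃ k, 1 ≤ k ∧ k ≤ N ∧ relabelFn a b k = C := by
  obtain ⟨i, hi, -⟩ := a.uniq C h1 h2
  have hbne : b.w i ≠ 0 := by
    intro h
    have := (hz i).mpr h
    omega
  obtain ⟨t, -, ht⟩ := Finset.mem_image.mp ((b.w_ne_zero_iff i).mp hbne)
  refine ⟨(t : ℕ) + 1, by omega, by have := t.isLt; omega, ?_⟩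
  rw [relabelFn_pos, ht, hi]

/-- Relabelling an abacus `c` by the permutation turning `b` into `a`. -/
def relabelAb (hz : ∀ q, (a.w q = 0 ↔ b.w q = 0)) (c : Abacus N) : Abacus N where
  w := fun q => relabelFn a b (c.w q)
  w_le := by
    intro i
    unfold relabelFn
    split
    · exact a.w_le _
    · omega
  uniq := by
    intro B hB1 hB2
    obtain ⟨k, hk1, hk2, hk⟩ := relabelFn_surj hz hB1 hB2
    obtain ⟨i, hi, hu⟩ := c.uniq k hk1 hk2
    refine ⟨i, ?_, ?_⟩
    · show relabelFn a b (c.w i) = B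
      rw [hi, hk]
    intro y hy
    have hcy : c.w y ≠ 0 := by
      intro h
      rw [h, relabelFn_zero] at hy
      omega
    have : c.w y = k := relabelFn_inj hz (by omega) (c.w_le y) hk1 hk2 (by rw [hy, hk])
    exact hu y this

lemma relabelAb_w (hz : ∀ q, (a.w q = 0 ↔ b.w q = 0)) (c : Abacus N) (q : ℕ) : (relabelAb hz c).w q = relabelFn a b (c.w q) := rfl

lemma relabelAb_w_zero_iff (hz : ∀ q, (a.w q = 0 ↔ b.w q = 0)) (c : Abacus N) (q : ℕ) :
    ((relabelAb hz c).w q = 0 ↔ c.w q = 0) := by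
  rw [relabelAb_w]
  constructor
  · intro h
    by_contra hc
    exact relabelFn_ne' hz (by omega) (c.w_le q) h
  · intro h
    rw [h, relabelFn_zero]

lemma relabelAb_shape (hz : ∀ q, (a.w q = 0 ↔ b.w q = 0)) {c : Abacus N} {l : Ptn} (hc : c.HasShape l) :
    (relabelAb hz c).HasShape l := by
  rw [Abacus.hasShape_iff] at hc ⊢
  refine ⟨hc.1, fun q => ?_⟩
  rw [← hc.2 q]
  have := relabelAb_w_zero_iff hz c q
  tauto

lemma relabelAb_move (hz : ∀ q, (a.w q = 0 ↔ b.w q = 0)) {c c' : Abacus N} {r i : ℕ} (hmv : IsRMove r c c' i) :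
    IsRMove r (relabelAb hz c) (relabelAb hz c') i := by
  obtain ⟨h1, h2, h3, h4, h5⟩ := hmv
  refine ⟨?_, ?_, ?_, ?_, ?_⟩
  · have := relabelAb_w_zero_iff hz c i
    tauto
  · rw [relabelAb_w, h2, relabelFn_zero]
  · rw [relabelAb_w, h3, relabelFn_zero]
  · rw [relabelAb_w, relabelAb_w, h4]
  · intro j hj1 hj2
    rw [relabelAb_w, relabelAb_w, h5 j hj1 hj2]

lemma relabelAb_self (hz : ∀ q, (a.w q = 0 ↔ b.w q = 0)) : relabelAb hz b = a := by
  apply Abacus.ext'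
  funext q
  rw [relabelAb_w]
  rcases eq_or_ne (b.w q) 0 with h | h
  · rw [h, relabelFn_zero]
    exact ((hz q).mpr h).symm
  · have hk1 : 1 ≤ b.w q := by omega
    have hk2 := b.w_le q
    obtain ⟨i, hi, hu⟩ := b.uniq (b.w q) hk1 hk2
    have e1 : q = i := hu q rfl
    have e2 : b.pos ⟨b.w q - 1, by omega⟩ = i := by
      apply hu
      rw [b.pos_spec]
      simp only
      omega
    unfold relabelFn
    rw [dif_pos ⟨hk1, hk2⟩, e2, ← e1]

end Aux6

/-- **Lemma 3.2(ii)**: if `λ/μ` is an `r`-decomposable skew partition of size `rm`, then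
`(w⁽⁰⁾, …, w⁽ᵐ⁾) ↦ w⁽ᵐ⁾` is a bijection from `K_N^{r,m}(μ,λ)` to `Abc_N(λ)`. -/
theorem KSet_bijection (N r m : ℕ) (hr : 0 < r) (hm : 0 < m) (hN : 0 < N)
    (mu lam : Ptn) (hmu : ∀ i, N ≤ i → mu.part i = 0) (hlam : ∀ i, N ≤ i → lam.part i = 0)
    (hsub : Ptn.Sub mu lam) (hdec : RDecomposable r mu lam)
    (hsize : lam.size = mu.size + r * m) :
    Set.BijOn (fun v : Fin (m + 1) → Abacus N => v (Fin.last m))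
      {v | KSet N r m mu lam v} {a : Abacus N | a.HasShape lam} := by
  refine ⟨?_, ?_, ?_⟩
  · intro v hv
    exact hv.2.1
  · -- injectivity
    intro v hv v' hv' hend
    simp only at hend
    obtain ⟨hv0, hvl, idx, hidxmono, hmv⟩ := hv
    obtain ⟨hv0', hvl', idx', hidxmono', hmv'⟩ := hv'
    set vN : ℕ → Abacus N := fun j => v ⟨min j m, by omega⟩ with hvN
    set vN' : ℕ → Abacus N := fun j => v' ⟨min j m, by omega⟩ with hvN'
    set idxN : ℕ → ℕ := fun j => if h : j < m then idx ⟨j, h⟩ else 0 with hidxN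
    set idxN' : ℕ → ℕ := fun j => if h : j < m then idx' ⟨j, h⟩ else 0 with hidxN'
    have hvalid : ValidSeq r m vN idxN := by
      constructor
      · intro j k hjk hk
        simp only [hidxN, dif_pos (show j < m by omega), dif_pos hk]
        exact hidxmono (show (⟨j, by omega⟩ : Fin m) < ⟨k, hk⟩ from hjk)
      · intro j hj
        have e1 : vN j = v (Fin.castSucc ⟨j, hj⟩) :=
          congrArg v (Fin.ext (by simp [Fin.castSucc]; omega))
        have e2 : vN (j + 1) = v (Fin.succ ⟨j, hj⟩) :=
          congrArg v (Fin.ext (by simp; omega))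
        rw [e1, e2]
        simp only [hidxN, dif_pos hj]
        exact hmv ⟨j, hj⟩
    have hvalid' : ValidSeq r m vN' idxN' := by
      constructor
      · intro j k hjk hk
        simp only [hidxN', dif_pos (show j < m by omega), dif_pos hk]
        exact hidxmono' (show (⟨j, by omega⟩ : Fin m) < ⟨k, hk⟩ from hjk)
      · intro j hj
        have e1 : vN' j = v' (Fin.castSucc ⟨j, hj⟩) :=
          congrArg v' (Fin.ext (by simp [Fin.castSucc]; omega))
        have e2 : vN' (j + 1) = v' (Fin.succ ⟨j, hj⟩) :=
          congrArg v' (Fin.ext (by simp; omega))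
        rw [e1, e2]
        simp only [hidxN', dif_pos hj]
        exact hmv' ⟨j, hj⟩
    have hz0 : ∀ p, (vN 0).w p = 0 ↔ (vN' 0).w p = 0 := by
      have e1 : vN 0 = v 0 := congrArg v (Fin.ext (by simp))
      have e2 : vN' 0 = v' 0 := congrArg v' (Fin.ext (by simp))
      rw [e1, e2]
      exact Abacus.sameShape_zero hv0 hv0'
    have hendN : vN m = vN' m := by
      have e1 : vN m = v (Fin.last m) := congrArg v (Fin.ext (by simp [Fin.last]))
      have e2 : vN' m = v' (Fin.last m) := congrArg v' (Fin.ext (by simp [Fin.last]))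
      rw [e1, e2, hend]
    have hall := injSeqN r m vN vN' idxN idxN' hvalid hvalid' hz0 hendN
    funext j
    have e1 : vN j.val = v j := congrArg v (Fin.ext (by simp; omega))
    have e2 : vN' j.val = v' j := congrArg v' (Fin.ext (by simp; omega))
    rw [← e1, ← e2]
    exact hall j.val (by omega)
  · -- surjectivity
    intro a ha
    obtain ⟨v0, hK⟩ := kset_nonempty N r m hr hN mu lam hlam hdec hsize
    obtain ⟨hK0, hKl, idx, hKm, hKmv⟩ := hK
    have hz : ∀ q, (a.w q = 0 ↔ (v0 (Fin.last m)).w q = 0) := Abacus.sameShape_zero ha hKl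
    refine ⟨fun j => relabelAb hz (v0 j),
      ⟨relabelAb_shape hz hK0, relabelAb_shape hz hKl, idx, hKm,
        fun j => relabelAb_move hz (hKmv j)⟩, ?_⟩
    exact relabelAb_self hz
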